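/- arXiv:1911.05022 — 3 statements merged into one kernel-verified Lean document; each statement's English description precedes it below -/
import Mathlib

section
/- Assume there exist ρ > 0 and T ∈ (0,∞] such that P(X_s ≥ 0) ≤ ρ for all s < T. Then there is an absolute constant c > 0 (one may take c = exp(∫₁^∞ e^{-s} s^{-1} ds) when T < ∞, and c = 1 when T = ∞) such that κ(λz, 0) ≤ c λ^ρ κ(z, 0) for all λ > 1 and z ≥ 1/T, where κ(z,0) = exp(∫₀^∞ (e^{-s} - e^{-zs}) s^{-1} P(X_s ≥ 0) ds). -/
/-!
Write `g(s) = (e^{-zs} - e^{-λzs}) / s ≥ 0`, so that `log κ(λz,0) - log κ(z,0) = ∫₀^∞ g P`.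
Below `1/z ≤ T` we have `P ≤ ρ`, and Frullani's integral `∫₀^∞ g = log λ` bounds that part by
`ρ log λ`. From `1/z` on we only use `P ≤ 1` and `g(s) ≤ e^{-zs}/s`, whose integral over
`[1/z, ∞)` is `∫₁^∞ e^{-u}/u du` by scaling. Hence `c = exp (∫₁^∞ e^{-u}/u du)`.
-/

open MeasureTheory Set Real Filter Topology
open scoped ENNReal

lemma integrableOn_exp_neg_mul_div_Ioi {w a : ℝ} (hw : 0 < w) (ha : 0 < a) :
    IntegrableOn (fun s => exp (-(w * s)) / s) (Ioi a) := by
  have hexp := exp_neg_integrableOn_Ioi a hw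
  simp_rw [neg_mul] at hexp
  simp_rw [div_eq_mul_inv]
  refine hexp.mul_bdd (c := a⁻¹) (by fun_prop) ?_
  filter_upwards [ae_restrict_mem measurableSet_Ioi] with s hs
  rw [norm_inv, Real.norm_of_nonneg (ha.trans hs).le]
  exact inv_anti₀ ha hs.le

lemma integrableOn_exp_neg_sub_exp_neg_div {a b : ℝ} (ha : 0 < a) (hb : 0 < b) :
    IntegrableOn (fun s => (exp (-(a * s)) - exp (-(b * s))) / s) (Ioi 0) := by
  set f : ℝ → ℝ := fun s => exp (-(a * s)) - exp (-(b * s))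
  rw [← Ioc_union_Ioi_eq_Ioi zero_le_one, integrableOn_union]
  constructor
  · -- near `0` the integrand is the difference quotient of `f` at `0`, which is continuous
    have hdslope : Continuous (dslope f 0) := by
      rw [← continuousOn_univ, continuousOn_dslope univ_mem]
      exact ⟨by fun_prop, by fun_prop⟩
    refine (hdslope.integrableOn_Icc.mono_set Ioc_subset_Icc_self).congr_fun
      (fun s hs => ?_) measurableSet_Ioc
    simp [dslope_of_ne f hs.1.ne', slope_def_field, f]
  · simp_rw [sub_div]
    exact (integrableOn_exp_neg_mul_div_Ioi ha one_pos).sub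
      (integrableOn_exp_neg_mul_div_Ioi hb one_pos)

lemma integral_exp_neg_sub_exp_neg_div {a b : ℝ} (ha : 0 < a) (hb : 0 < b) :
    ∫ s in Ioi 0, (exp (-(a * s)) - exp (-(b * s))) / s = log (b / a) := by
  have hcont : Continuous fun u => exp (-u) := by fun_prop
  have hfrullani := Frullani.integral_Ioi_eq (L := 1) (R := 0)
    (hcont.locallyIntegrable.locallyIntegrableOn _) ha hb
    ((hcont.tendsto' 0 1 (by simp)).mono_left nhdsWithin_le_nhds)
    tendsto_exp_neg_atTop_nhds_zero
    (by simpa [inv_mul_eq_div] using integrableOn_exp_neg_sub_exp_neg_div ha hb)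
  simpa [inv_mul_eq_div] using hfrullani

lemma integral_comp_mul_div_Ioi (φ : ℝ → ℝ) {w a : ℝ} (hw : 0 < w) (ha : 0 ≤ a) :
    ∫ s in Ioi a, φ (w * s) / s = ∫ u in Ioi (w * a), φ u / u := by
  have hscale : ∀ s ∈ Ioi a, φ (w * s) / s = w * (φ (w * s) / (w * s)) := fun s hs => by
    have : s ≠ 0 := (ha.trans_lt hs).ne'
    field_simp
  rw [setIntegral_congr_fun measurableSet_Ioi hscale, integral_const_mul,
    integral_comp_mul_left_Ioi (fun u => φ u / u) a hw, smul_eq_mul, mul_inv_cancel_left₀ hw.ne']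

lemma MeasureTheory.IntegrableOn.mul_of_nonneg_of_le_one {f P : ℝ → ℝ} {S : Set ℝ}
    (hf : IntegrableOn f S) (hPmeas : Measurable P) (hP0 : ∀ x, 0 ≤ P x) (hP1 : ∀ x, P x ≤ 1) :
    IntegrableOn (fun x => f x * P x) S :=
  Integrable.mul_bdd hf hPmeas.aestronglyMeasurable
    (ae_of_all _ fun x => by rw [Real.norm_of_nonneg (hP0 x)]; exact hP1 x)

theorem integral_exp_neg_sub_exp_neg_div_mul_le {P : ℝ → ℝ} (hPmeas : Measurable P)
    (hP0 : ∀ s, 0 ≤ P s) (hP1 : ∀ s, P s ≤ 1) {ρ z l : ℝ} (hρ : 0 ≤ ρ) (hz : 0 < z)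
    (hl : 1 ≤ l) (hPρ : ∀ s, 0 < s → s < z⁻¹ → P s ≤ ρ) :
    ∫ s in Ioi 0, (exp (-(z * s)) - exp (-(l * z * s))) / s * P s ≤
      ρ * log l + ∫ u in Ioi 1, exp (-u) / u := by
  set g : ℝ → ℝ := fun s => (exp (-(z * s)) - exp (-(l * z * s))) / s
  set h : ℝ → ℝ := (Ici z⁻¹).indicator fun s => exp (-(z * s)) / s
  have hlz : 0 < l * z := by positivity
  have hg_int : IntegrableOn g (Ioi 0) := integrableOn_exp_neg_sub_exp_neg_div hz hlz
  have hh_int : IntegrableOn h (Ioi 0) := by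
    refine (IntegrableOn.integrable_indicator ?_ measurableSet_Ici).integrableOn
    exact (integrableOn_Ici_iff_integrableOn_Ioi enorm_ne_top).2
      (integrableOn_exp_neg_mul_div_Ioi hz (inv_pos.2 hz))
  have hpointwise : ∀ s ∈ Ioi (0 : ℝ), g s * P s ≤ ρ * g s + h s := by
    intro s (hs : 0 < s)
    have hzs : z * s ≤ l * z * s := by nlinarith [mul_pos hz hs]
    have hg0 : 0 ≤ g s := div_nonneg (sub_nonneg.2 (exp_le_exp.2 (neg_le_neg hzs))) hs.le
    by_cases hsz : s < z⁻¹
    · have : h s = 0 := indicator_of_notMem (not_le.2 hsz) _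
      nlinarith [hPρ s hs hsz]
    · have hgle : g s ≤ exp (-(z * s)) / s :=
        div_le_div_of_nonneg_right (sub_le_self _ (exp_pos _).le) hs.le
      have : h s = exp (-(z * s)) / s := indicator_of_mem (not_lt.1 hsz) _
      nlinarith [hP1 s]
  have hh : ∫ s in Ioi 0, h s = ∫ u in Ioi 1, exp (-u) / u := by
    rw [setIntegral_indicator measurableSet_Ici,
      inter_eq_right.2 (Ici_subset_Ioi.2 (inv_pos.2 hz)), integral_Ici_eq_integral_Ioi,
      integral_comp_mul_div_Ioi (fun u => exp (-u)) hz (inv_pos.2 hz).le, mul_inv_cancel₀ hz.ne']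
  calc ∫ s in Ioi 0, g s * P s
      ≤ ∫ s in Ioi 0, (ρ * g s + h s) :=
        setIntegral_mono_on (hg_int.mul_of_nonneg_of_le_one hPmeas hP0 hP1)
          ((hg_int.const_mul ρ).add hh_int) measurableSet_Ioi hpointwise
    _ = ρ * log l + ∫ u in Ioi 1, exp (-u) / u := by
        rw [integral_add (hg_int.const_mul ρ) hh_int, integral_const_mul, hh,
          integral_exp_neg_sub_exp_neg_div hz hlz, mul_div_cancel_right₀ l hz.ne']

lemma ENNReal.ofReal_lt_of_lt_inv {T : ℝ≥0∞} {s z : ℝ} (hz : 0 < z)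
    (hzT : T⁻¹ ≤ ENNReal.ofReal z) (hs : s < z⁻¹) : ENNReal.ofReal s < T :=
  calc ENNReal.ofReal s < ENNReal.ofReal z⁻¹ :=
        (ENNReal.ofReal_lt_ofReal_iff (inv_pos.2 hz)).2 hs
    _ = (ENNReal.ofReal z)⁻¹ := ENNReal.ofReal_inv_of_pos hz
    _ ≤ T := ENNReal.inv_le_iff_inv_le.1 hzT

theorem kappa_weak_scaling_general
    (P : ℝ → ℝ) (hPmeas : Measurable P) (hP0 : ∀ s, 0 ≤ P s) (hP1 : ∀ s, P s ≤ 1)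
    (ρ : ℝ) (hρ : 0 < ρ) (T : ℝ≥0∞)
    (hPρ : ∀ s : ℝ, 0 < s → ENNReal.ofReal s < T → P s ≤ ρ) :
    ∃ c : ℝ, 0 < c ∧ ∀ l z : ℝ, 1 < l → 0 < z → T⁻¹ ≤ ENNReal.ofReal z →
      Real.exp (∫ s in Ioi (0 : ℝ),
          (Real.exp (-s) - Real.exp (-(l * z * s))) / s * P s) ≤
        c * l ^ ρ *
          Real.exp (∫ s in Ioi (0 : ℝ),
            (Real.exp (-s) - Real.exp (-(z * s))) / s * P s) := by
  refine ⟨exp (∫ u in Ioi 1, exp (-u) / u), exp_pos _, fun l z hl hz hzT => ?_⟩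
  have hkappa_int : IntegrableOn (fun s => (exp (-s) - exp (-(z * s))) / s * P s) (Ioi 0) := by
    simpa using (integrableOn_exp_neg_sub_exp_neg_div one_pos hz).mul_of_nonneg_of_le_one
      hPmeas hP0 hP1
  have hdiff_int : IntegrableOn
      (fun s => (exp (-(z * s)) - exp (-(l * z * s))) / s * P s) (Ioi 0) :=
    (integrableOn_exp_neg_sub_exp_neg_div hz (by positivity)).mul_of_nonneg_of_le_one
      hPmeas hP0 hP1
  have hsplit : ∫ s in Ioi 0, (exp (-s) - exp (-(l * z * s))) / s * P s =
      (∫ s in Ioi 0, (exp (-s) - exp (-(z * s))) / s * P s) +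
        ∫ s in Ioi 0, (exp (-(z * s)) - exp (-(l * z * s))) / s * P s := by
    rw [← integral_add hkappa_int hdiff_int]
    exact setIntegral_congr_fun measurableSet_Ioi fun s _ => by ring
  have hdiff := integral_exp_neg_sub_exp_neg_div_mul_le hPmeas hP0 hP1 hρ.le hz hl.le
    fun s hs hsz => hPρ s hs (ENNReal.ofReal_lt_of_lt_inv hz hzT hsz)
  rw [hsplit, rpow_def_of_pos (zero_lt_one.trans hl), ← exp_add, ← exp_add]
  exact exp_le_exp.2 (by linarith)

/-- If `P(X_s ≥ 0) ≤ ρ` for `s < T`, then `κ(λz,0) ≤ c λ^ρ κ(z,0)` for `λ > 1`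
and `z ≥ 1/T`, with an absolute constant `c`. -/
theorem kappa_weak_scaling
    (P : ℝ → ℝ) (hPmeas : Measurable P) (hP0 : ∀ s, 0 ≤ P s) (hP1 : ∀ s, P s ≤ 1)
    (ρ : ℝ) (hρ : 0 < ρ) (T : ℝ≥0∞) (hT : 0 < T)
    (hPρ : ∀ s : ℝ, 0 < s → ENNReal.ofReal s < T → P s ≤ ρ) :
    ∃ c : ℝ, 0 < c ∧ ∀ l z : ℝ, 1 < l → 0 < z → T⁻¹ ≤ ENNReal.ofReal z →
      Real.exp (∫ s in Ioi (0 : ℝ),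
          (Real.exp (-s) - Real.exp (-(l * z * s))) / s * P s) ≤
        c * l ^ ρ *
          Real.exp (∫ s in Ioi (0 : ℝ),
            (Real.exp (-s) - Real.exp (-(z * s))) / s * P s) :=
  kappa_weak_scaling_general P hPmeas hP0 hP1 ρ hρ T hPρ
end

section
/- Let X be a Lévy process, x ∈ ℝ, R > 0, with 0 < x < R, and let τ = inf{t > 0 : X_t ∉ (0,R)}. Assume the identity E^x[∫₀^∞ f(X_t) dt] = ∫₀^∞ V(dy) ∫₀^x V̂(dz) f(x + y - z) holds for every measurable f : ℝ → [0,∞) (with f vanishing off [0,∞) in the relevant sense), where V, V̂ are the renewal functions of the ascending and descending ladder height processes. Then E^x τ ≤ V(R) V̂(x). -/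
open MeasureTheory Set Filter Topology
open scoped ENNReal

/-! Up to the exit time the path stays in `[0, R]`, so `τ` is at most the total time spent in
`[0, R]`, which the occupation-time identity computes with `f = 𝟙[0, R]`. In the renewal integral
`x + y - z ≥ y` for `z ≤ x`, so only `y ∈ [0, R]` contribute, each by at most `V̂[0, x]`; hence the
bound `V[0, R] · V̂[0, x] ≤ V(R) V̂(x)`. -/

theorem ofReal_le_setLIntegral_Ioi_indicator {α : Type*} (γ : ℝ → α) (S : Set α) (T : ℝ)
    (h : ∀ t ∈ Ioo 0 T, γ t ∈ S) :
    ENNReal.ofReal T ≤ ∫⁻ t in Ioi 0, S.indicator (1 : α → ℝ≥0∞) (γ t) :=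
  calc ENNReal.ofReal T = ∫⁻ t in Ioo 0 T, S.indicator (1 : α → ℝ≥0∞) (γ t) := by
        rw [setLIntegral_congr_fun measurableSet_Ioo fun t ht => indicator_of_mem (h t ht) 1]
        simp [Real.volume_Ioo]
    _ ≤ ∫⁻ t in Ioi 0, S.indicator (1 : α → ℝ≥0∞) (γ t) := lintegral_mono_set Ioo_subset_Ioi_self

theorem setLIntegral_Icc_indicator_add_sub_le (ν : Measure ℝ) (x R y : ℝ) :
    ∫⁻ z in Icc 0 x, (Icc 0 R).indicator (1 : ℝ → ℝ≥0∞) (x + y - z) ∂ν ≤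
      (Iic R).indicator (fun _ => ν (Icc 0 x)) y := by
  by_cases hy : y ≤ R
  · rw [indicator_of_mem (mem_Iic.mpr hy)]
    calc ∫⁻ z in Icc 0 x, (Icc 0 R).indicator (1 : ℝ → ℝ≥0∞) (x + y - z) ∂ν
        ≤ ∫⁻ _ in Icc 0 x, 1 ∂ν := lintegral_mono fun _ => indicator_le (fun _ _ => le_rfl) _
      _ = ν (Icc 0 x) := setLIntegral_one _
  · rw [indicator_of_notMem (by simpa using hy)]
    have hzero : EqOn (fun z => (Icc 0 R).indicator (1 : ℝ → ℝ≥0∞) (x + y - z)) 0 (Icc 0 x) :=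
      fun z hz => indicator_of_notMem (fun h => hy (by linarith [h.2, hz.2])) 1
    simp [setLIntegral_congr_fun measurableSet_Icc hzero]

theorem setLIntegral_Ici_setLIntegral_Icc_indicator_le (μ ν : Measure ℝ) (x R : ℝ) :
    ∫⁻ y in Ici 0, ∫⁻ z in Icc 0 x, (Icc 0 R).indicator (1 : ℝ → ℝ≥0∞) (x + y - z) ∂ν ∂μ ≤
      μ (Icc 0 R) * ν (Icc 0 x) :=
  calc _ ≤ ∫⁻ y in Ici 0, (Iic R).indicator (fun _ => ν (Icc 0 x)) y ∂μ :=
        lintegral_mono fun y => setLIntegral_Icc_indicator_add_sub_le ν x R y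
    _ = μ (Icc 0 R) * ν (Icc 0 x) := by
        rw [lintegral_indicator_const measurableSet_Iic, Measure.restrict_apply measurableSet_Iic,
          Iic_inter_Ici, mul_comm]

theorem tendsto_atBot_of_eq_zero_of_neg {f : ℝ → ℝ} (hf : ∀ y < 0, f y = 0) :
    Tendsto f atBot (𝓝 0) :=
  tendsto_const_nhds.congr' <| (eventually_lt_atBot 0).mono fun y hy => (hf y hy).symm

namespace StieltjesFunction

variable {F : StieltjesFunction ℝ}

theorem nonneg_of_eq_zero_of_neg (hF : ∀ y < 0, F y = 0) (a : ℝ) : 0 ≤ F a :=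
  F.mono.le_of_tendsto (tendsto_atBot_of_eq_zero_of_neg hF) a

theorem measure_Icc_zero_le_of_eq_zero_of_neg (hF : ∀ y < 0, F y = 0) (a : ℝ) :
    F.measure (Icc 0 a) ≤ ENNReal.ofReal (F a) :=
  calc F.measure (Icc 0 a) ≤ F.measure (Iic a) := measure_mono Icc_subset_Iic_self
    _ = ENNReal.ofReal (F a) := by
        rw [F.measure_Iic (tendsto_atBot_of_eq_zero_of_neg hF), sub_zero]

end StieltjesFunction

theorem exit_time_upper_bound_general
    {Ω : Type*} [MeasurableSpace Ω] (P : Measure Ω)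
    (X : ℝ → Ω → ℝ) (τ : Ω → ℝ)
    (x R : ℝ)
    (V Vhat : StieltjesFunction ℝ)
    (hVneg : ∀ y : ℝ, y < 0 → V y = 0) (hVhatneg : ∀ y : ℝ, y < 0 → Vhat y = 0)
    (hin : ∀ ω, ∀ t : ℝ, 0 ≤ t → t < τ ω → X t ω ∈ Icc 0 R)
    (hocc : ∀ f : ℝ → ℝ≥0∞, Measurable f →
      (∫⁻ ω, ∫⁻ t in Ioi (0 : ℝ), f (X t ω) ∂volume ∂P) =
        ∫⁻ y in Ici (0 : ℝ), (∫⁻ z in Icc (0 : ℝ) x, f (x + y - z) ∂Vhat.measure)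
          ∂V.measure) :
    (∫⁻ ω, ENNReal.ofReal (τ ω) ∂P) ≤ ENNReal.ofReal (V R * Vhat x) :=
  calc (∫⁻ ω, ENNReal.ofReal (τ ω) ∂P)
      ≤ ∫⁻ ω, ∫⁻ t in Ioi 0, (Icc 0 R).indicator 1 (X t ω) ∂volume ∂P :=
        lintegral_mono fun ω => ofReal_le_setLIntegral_Ioi_indicator (X · ω) _ _
          fun t ht => hin ω t ht.1.le ht.2
    _ = ∫⁻ y in Ici 0, ∫⁻ z in Icc 0 x, (Icc 0 R).indicator 1 (x + y - z) ∂Vhat.measure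
          ∂V.measure := hocc _ (measurable_one.indicator measurableSet_Icc)
    _ ≤ V.measure (Icc 0 R) * Vhat.measure (Icc 0 x) :=
        setLIntegral_Ici_setLIntegral_Icc_indicator_le _ _ x R
    _ ≤ ENNReal.ofReal (V R) * ENNReal.ofReal (Vhat x) :=
        mul_le_mul' (V.measure_Icc_zero_le_of_eq_zero_of_neg hVneg R)
          (Vhat.measure_Icc_zero_le_of_eq_zero_of_neg hVhatneg x)
    _ = ENNReal.ofReal (V R * Vhat x) :=
        (ENNReal.ofReal_mul (V.nonneg_of_eq_zero_of_neg hVneg R)).symm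

/-- If the occupation-time identity
`E^x ∫₀^∞ f(X_t) dt = ∫₀^∞ V(dy) ∫₀^x V̂(dz) f(x+y-z)` holds, then the expected
exit time of `(0,R)` started at `x ∈ (0,R)` is at most `V(R) V̂(x)`. -/
theorem exit_time_upper_bound
    {Ω : Type*} [MeasurableSpace Ω] (P : Measure Ω) [IsProbabilityMeasure P]
    (X : ℝ → Ω → ℝ) (τ : Ω → ℝ) (hτ : ∀ ω, 0 ≤ τ ω)
    (x R : ℝ) (hx : 0 < x) (hxR : x < R)
    (V Vhat : StieltjesFunction ℝ) (hV0 : V 0 = 0) (hVhat0 : Vhat 0 = 0)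
    (hVneg : ∀ y : ℝ, y < 0 → V y = 0) (hVhatneg : ∀ y : ℝ, y < 0 → Vhat y = 0)
    (hin : ∀ ω, ∀ t : ℝ, 0 ≤ t → t < τ ω → X t ω ∈ Icc 0 R)
    (hocc : ∀ f : ℝ → ℝ≥0∞, Measurable f →
      (∫⁻ ω, ∫⁻ t in Ioi (0 : ℝ), f (X t ω) ∂volume ∂P) =
        ∫⁻ y in Ici (0 : ℝ), (∫⁻ z in Icc (0 : ℝ) x, f (x + y - z) ∂Vhat.measure)
          ∂V.measure) :
    (∫⁻ ω, ENNReal.ofReal (τ ω) ∂P) ≤ ENNReal.ofReal (V R * Vhat x) :=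
  exit_time_upper_bound_general P X τ x R V Vhat hVneg hVhatneg hin hocc
end

section
/- Let ν be a Lévy measure on ℝ and C, R > 0 with ν(z,∞) ≤ C ν(-∞,-z) for all z > R. Then for all x > 0, ∫₀^x ∫_y^∞ ν({u : |u| > z}) dz dy ≤ (1+C) ∫₀^x ∫_y^∞ ν(-∞,-z) dz dy + (1+C) x ∫₀^R ν(z,∞) dz. -/
open MeasureTheory Set
open scoped ENNReal

/-- If `ν(z,∞) ≤ C ν(-∞,-z)` for `z > R`, then
`∫₀^x∫_y^∞ ν({|u|>z}) dz dy ≤ (1+C) ∫₀^x∫_y^∞ ν(-∞,-z) dz dy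
  + (1+C) x ∫₀^R ν(z,∞) dz` for all `x > 0`. -/
theorem dominated_tail_comparison
    (ν : Measure ℝ) (hν0 : ν {0} = 0)
    (hν2 : ∫⁻ y, ENNReal.ofReal (min 1 (y ^ 2)) ∂ν < ⊤)
    (C R : ℝ) (hC : 0 < C) (hR : 0 < R)
    (hdom : ∀ z : ℝ, R < z → ν (Ioi z) ≤ ENNReal.ofReal C * ν (Iio (-z))) :
    ∀ x : ℝ, 0 < x →
      (∫⁻ y in Ioo (0 : ℝ) x, ∫⁻ z in Ioi y, ν {u | z < |u|}) ≤
        ENNReal.ofReal (1 + C) *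
            (∫⁻ y in Ioo (0 : ℝ) x, ∫⁻ z in Ioi y, ν (Iio (-z))) +
          ENNReal.ofReal (1 + C) * ENNReal.ofReal x *
            ∫⁻ z in Ioo (0 : ℝ) R, ν (Ioi z) := by
  intro x hx
  set f : ℝ → ℝ≥0∞ := fun z => ν (Iio (-z)) with hfdef
  set g : ℝ → ℝ≥0∞ := fun z => ν (Ioi z) with hgdef
  have hfa : Antitone f := fun a b hab =>
    measure_mono (fun u hu => lt_of_lt_of_le hu (neg_le_neg hab))
  have hga : Antitone g := fun a b hab =>
    measure_mono (fun u hu => lt_of_le_of_lt hab hu)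
  have hfm : Measurable f := hfa.measurable
  have hgm : Measurable g := hga.measurable
  set K : ℝ≥0∞ := ∫⁻ z in Ioo (0:ℝ) R, g z with hKdef
  set A : ℝ → ℝ≥0∞ := fun y => ∫⁻ z in Ioi y, f z with hAdef
  have hAa : Antitone A := fun a b hab =>
    lintegral_mono_set (Ioi_subset_Ioi hab)
  have hAm : Measurable A := hAa.measurable
  have hoc : ENNReal.ofReal (1 + C) = 1 + ENNReal.ofReal C := by
    rw [ENNReal.ofReal_add (by norm_num) hC.le, ENNReal.ofReal_one]
  have key : ∀ y ∈ Ioo (0:ℝ) x,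
      (∫⁻ z in Ioi y, ν {u | z < |u|}) ≤ ENNReal.ofReal (1 + C) * A y + K := by
    intro y hy
    have hy0 : (0:ℝ) < y := hy.1
    have step1 : (∫⁻ z in Ioi y, ν {u | z < |u|})
        = (∫⁻ z in Ioi y, f z) + ∫⁻ z in Ioi y, g z := by
      rw [← lintegral_add_left hfm]
      refine setLIntegral_congr_fun measurableSet_Ioi (fun z hz => ?_)
      have hz0 : (0:ℝ) < z := hy0.trans hz
      have hset : {u : ℝ | z < |u|} = Iio (-z) ∪ Ioi z := by
        ext u
        simp only [mem_setOf_eq, mem_union, mem_Iio, mem_Ioi, lt_abs]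
        constructor
        · rintro (h | h)
          · exact Or.inr h
          · exact Or.inl (by linarith)
        · rintro (h | h)
          · exact Or.inr (by linarith)
          · exact Or.inl h
      have hdisj : Disjoint (Iio (-z)) (Ioi z) := by
        rw [Set.disjoint_left]
        intro u hu1 hu2
        simp only [mem_Iio] at hu1
        simp only [mem_Ioi] at hu2
        linarith
      rw [hset, measure_union hdisj measurableSet_Ioi]
    have hsplit : Ioi y = (Ioi y ∩ Iic R) ∪ (Ioi y ∩ Ioi R) := by
      rw [← inter_union_distrib_left, Iic_union_Ioi, inter_univ]
    have step2 : (∫⁻ z in Ioi y, g z) ≤ K + ENNReal.ofReal C * A y := by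
      rw [hsplit, lintegral_union (measurableSet_Ioi.inter measurableSet_Ioi)
        (Set.disjoint_left.2 fun u hu1 hu2 => not_lt.2 hu1.2 hu2.2)]
      gcongr ?_ + ?_
      · calc (∫⁻ z in Ioi y ∩ Iic R, g z) ≤ ∫⁻ z in Ioc 0 R, g z :=
              lintegral_mono_set (fun z hz => ⟨hy0.trans hz.1, hz.2⟩)
          _ = K := (setLIntegral_congr Ioo_ae_eq_Ioc).symm
      · calc (∫⁻ z in Ioi y ∩ Ioi R, g z)
            ≤ ∫⁻ z in Ioi y ∩ Ioi R, ENNReal.ofReal C * f z :=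
              setLIntegral_mono (hfm.const_mul _) (fun z hz => hdom z hz.2)
          _ = ENNReal.ofReal C * ∫⁻ z in Ioi y ∩ Ioi R, f z := lintegral_const_mul _ hfm
          _ ≤ ENNReal.ofReal C * A y := by
              gcongr
              exact lintegral_mono_set inter_subset_left
    calc (∫⁻ z in Ioi y, ν {u | z < |u|}) = A y + ∫⁻ z in Ioi y, g z := step1
      _ ≤ A y + (K + ENNReal.ofReal C * A y) := by gcongr
      _ = ENNReal.ofReal (1 + C) * A y + K := by rw [hoc]; ring
  calc (∫⁻ y in Ioo (0 : ℝ) x, ∫⁻ z in Ioi y, ν {u | z < |u|})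
      ≤ ∫⁻ y in Ioo (0:ℝ) x, (ENNReal.ofReal (1 + C) * A y + K) :=
        setLIntegral_mono ((hAm.const_mul _).add measurable_const) key
    _ = ENNReal.ofReal (1 + C) * (∫⁻ y in Ioo (0:ℝ) x, A y)
          + volume (Ioo (0:ℝ) x) * K := by
        rw [lintegral_add_right _ measurable_const, lintegral_const_mul _ hAm,
          setLIntegral_const]
        ring
    _ ≤ ENNReal.ofReal (1 + C) * (∫⁻ y in Ioo (0:ℝ) x, A y)
          + ENNReal.ofReal (1 + C) * ENNReal.ofReal x * K := by
        gcongr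
        rw [Real.volume_Ioo, sub_zero]
        calc ENNReal.ofReal x = 1 * ENNReal.ofReal x := (one_mul _).symm
          _ ≤ ENNReal.ofReal (1 + C) * ENNReal.ofReal x := by
              gcongr
              rw [← ENNReal.ofReal_one]
              exact ENNReal.ofReal_le_ofReal (by linarith)
end
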